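/- arXiv:2003.03451 — 2 statements merged into one kernel-verified Lean document; each statement's English description precedes it below -/
import Mathlib

section
/- Every causally continuous Lorentzian length space is stably causal; that is, if (X, d, ≪, ≤, τ) is a Lorentzian length space that is distinguishing and reflective, then the relation K⁺, the smallest closed and transitive relation on X × X containing J⁺ = {(x, y) : x ≤ y}, is antisymmetric. -/
open scoped NNReal ENNReal
open Set Filter Topology

/-- A Lorentzian pre-length space: a causal space `(X, ≪, ≤)` carried by a metric space `X`,
together with a time separation function `τ : X × X → [0, ∞]`. -/
structure LorentzianPreLengthSpace (X : Type*) [MetricSpace X] where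
  /-- The chronological relation `≪`. -/
  chron : X → X → Prop
  /-- The causal relation `≤`. -/
  causal : X → X → Prop
  chron_trans : ∀ {x y z : X}, chron x y → chron y z → chron x z
  causal_refl : ∀ x : X, causal x x
  causal_trans : ∀ {x y z : X}, causal x y → causal y z → causal x z
  chron_imp_causal : ∀ {x y : X}, chron x y → causal x y
  /-- The time separation function `τ`. -/
  tau : X → X → ℝ≥0∞
  tau_lsc : LowerSemicontinuous fun p : X × X => tau p.1 p.2
  tau_rev_triangle : ∀ {x y z : X}, causal x y → causal y z → tau x y + tau y z ≤ tau x z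
  tau_eq_zero : ∀ {x y : X}, ¬ causal x y → tau x y = 0
  tau_pos_iff : ∀ {x y : X}, 0 < tau x y ↔ chron x y

namespace LorentzianPreLengthSpace

variable {X : Type*} [MetricSpace X] (L : LorentzianPreLengthSpace X)

/-- Chronological future `I⁺(x)`. -/
def Iplus (x : X) : Set X := {y | L.chron x y}

/-- Chronological past `I⁻(x)`. -/
def Iminus (x : X) : Set X := {y | L.chron y x}

/-- Causal future `J⁺(x)`. -/
def Jplus (x : X) : Set X := {y | L.causal x y}

/-- Causal past `J⁻(x)`. -/
def Jminus (x : X) : Set X := {y | L.causal y x}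

/-- A future directed causal curve on `[a,b]`: non-constant, Lipschitz, and order preserving
from the order of `[a,b]` to the causal relation. -/
def IsFutureCausalCurve (γ : ℝ → X) (a b : ℝ) : Prop :=
  a < b ∧ (∃ K : ℝ≥0, LipschitzOnWith K γ (Icc a b)) ∧
    (∃ s ∈ Icc a b, ∃ t ∈ Icc a b, γ s ≠ γ t) ∧
    ∀ ⦃s⦄, s ∈ Icc a b → ∀ ⦃t⦄, t ∈ Icc a b → s < t → L.causal (γ s) (γ t)

/-- A future directed timelike curve on `[a,b]`. -/
def IsFutureTimelikeCurve (γ : ℝ → X) (a b : ℝ) : Prop :=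
  a < b ∧ (∃ K : ℝ≥0, LipschitzOnWith K γ (Icc a b)) ∧
    (∃ s ∈ Icc a b, ∃ t ∈ Icc a b, γ s ≠ γ t) ∧
    ∀ ⦃s⦄, s ∈ Icc a b → ∀ ⦃t⦄, t ∈ Icc a b → s < t → L.chron (γ s) (γ t)

/-- The `τ`-length of a curve: the infimum over all partitions
`a = t₀ < t₁ < ⋯ < t_N = b` (with `N ≥ 1`) of `∑ τ(γ(tᵢ), γ(tᵢ₊₁))`. -/
noncomputable def tauLength (γ : ℝ → X) (a b : ℝ) : ℝ≥0∞ :=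
  ⨅ n : ℕ, ⨅ t : {t : Fin (n + 2) → ℝ // StrictMono t ∧ t 0 = a ∧ t (Fin.last (n + 1)) = b},
    ∑ i : Fin (n + 1), L.tau (γ (t.1 i.castSucc)) (γ (t.1 i.succ))

/-- Causal path connectedness: causally related (distinct) points are joined by a future
directed causal curve, chronologically related points by a future directed timelike curve. -/
def CausallyPathConnected : Prop :=
  (∀ x y : X, L.causal x y → x ≠ y →
      ∃ γ : ℝ → X, ∃ a b : ℝ, L.IsFutureCausalCurve γ a b ∧ γ a = x ∧ γ b = y) ∧
  (∀ x y : X, L.chron x y →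
      ∃ γ : ℝ → X, ∃ a b : ℝ, L.IsFutureTimelikeCurve γ a b ∧ γ a = x ∧ γ b = y)

/-- `p ≤_U q`: there is a future directed causal curve from `p` to `q` with image in `U`. -/
def CausalInside (U : Set X) (p q : X) : Prop :=
  ∃ γ : ℝ → X, ∃ a b : ℝ, L.IsFutureCausalCurve γ a b ∧ γ a = p ∧ γ b = q ∧ γ '' Icc a b ⊆ U

/-- `U` is causally closed: the relation `≤_U` is closed under limits inside `U`. -/
def CausallyClosedNbhd (U : Set X) : Prop :=
  ∀ (p q : X) (pn qn : ℕ → X), (∀ n, L.CausalInside U (pn n) (qn n)) →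
    Tendsto pn atTop (𝓝 p) → Tendsto qn atTop (𝓝 q) → p ∈ U → q ∈ U → L.CausalInside U p q

/-- Every point has a causally closed open neighborhood. -/
def LocallyCausallyClosed : Prop :=
  ∀ x : X, ∃ U : Set X, IsOpen U ∧ x ∈ U ∧ L.CausallyClosedNbhd U

/-- Localizability: every point has a localizing open neighborhood `Ω`. -/
def Localizable : Prop :=
  ∀ x : X, ∃ Ω : Set X, IsOpen Ω ∧ x ∈ Ω ∧
    (∃ C : ℝ≥0, ∀ (γ : ℝ → X) (a b : ℝ), L.IsFutureCausalCurve γ a b →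
        γ '' Icc a b ⊆ Ω → eVariationOn γ (Icc a b) ≤ C) ∧
    ∃ ω : X → X → ℝ≥0∞,
      ContinuousOn (fun pq : X × X => ω pq.1 pq.2) (Ω ×ˢ Ω) ∧
      (∀ p ∈ Ω, ∀ q ∈ Ω, ω p q ≠ ⊤) ∧
      (∀ p ∈ Ω, ∀ q ∈ Ω, ∀ r ∈ Ω, L.causal p q → L.causal q r → ω p q + ω q r ≤ ω p r) ∧
      (∀ p ∈ Ω, ∀ q ∈ Ω, ¬ L.causal p q → ω p q = 0) ∧
      (∀ p ∈ Ω, ∀ q ∈ Ω, (0 < ω p q ↔ L.chron p q)) ∧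
      (∀ y ∈ Ω, (L.Iplus y ∩ Ω).Nonempty ∧ (L.Iminus y ∩ Ω).Nonempty) ∧
      (∀ p ∈ Ω, ∀ q ∈ Ω, L.causal p q → p ≠ q →
        ∃ γ : ℝ → X, ∃ a b : ℝ, L.IsFutureCausalCurve γ a b ∧ γ a = p ∧ γ b = q ∧
          γ '' Icc a b ⊆ Ω ∧ L.tauLength γ a b = ω p q ∧
          ∀ (σ : ℝ → X) (c e : ℝ), L.IsFutureCausalCurve σ c e → σ c = p → σ e = q →
            σ '' Icc c e ⊆ Ω → L.tauLength σ c e ≤ L.tauLength γ a b)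

/-- `L` is a Lorentzian length space: causally path connected, locally causally closed,
localizable, and `τ` is the supremum of `τ`-lengths of connecting causal curves
(the supremum of the empty set being `0`). -/
def IsLengthSpace : Prop :=
  L.CausallyPathConnected ∧ L.LocallyCausallyClosed ∧ L.Localizable ∧
    ∀ x y : X, L.tau x y = sSup {ℓ : ℝ≥0∞ | ∃ γ : ℝ → X, ∃ a b : ℝ,
      L.IsFutureCausalCurve γ a b ∧ γ a = x ∧ γ b = y ∧ ℓ = L.tauLength γ a b}

/-- `K⁺`: the smallest closed and transitive relation containing `J⁺`. -/
def Kplus : Set (X × X) :=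
  ⋂₀ {R : Set (X × X) | IsClosed R ∧ (∀ a b c : X, (a, b) ∈ R → (b, c) ∈ R → (a, c) ∈ R) ∧
      {pq : X × X | L.causal pq.1 pq.2} ⊆ R}

/-- The Alexandrov topology, generated by the chronological diamonds. -/
def AlexandrovTopology : TopologicalSpace X :=
  TopologicalSpace.generateFrom {s : Set X | ∃ x y : X, s = L.Iplus x ∩ L.Iminus y}

/-- Strong causality: the Alexandrov topology coincides with the metric topology. -/
def StronglyCausal : Prop :=
  L.AlexandrovTopology = (inferInstance : TopologicalSpace X)

/-- Non-total imprisonment: causal curves in a compact set have uniformly bounded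
`d`-arclength. -/
def NonTotallyImprisoning : Prop :=
  ∀ K : Set X, IsCompact K → ∃ C : ℝ≥0, ∀ (γ : ℝ → X) (a b : ℝ),
    L.IsFutureCausalCurve γ a b → γ '' Icc a b ⊆ K → eVariationOn γ (Icc a b) ≤ C

/-- Global hyperbolicity. -/
def GloballyHyperbolic : Prop :=
  L.NonTotallyImprisoning ∧ ∀ x y : X, IsCompact (L.Jplus x ∩ L.Jminus y)

/-- Causality: the causal relation is antisymmetric. -/
def Causal : Prop := ∀ x y : X, L.causal x y → L.causal y x → x = y

/-- Causal simplicity. -/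
def CausallySimple : Prop :=
  L.Causal ∧ ∀ x : X, IsClosed (L.Jplus x) ∧ IsClosed (L.Jminus x)

/-- Distinguishing. -/
def Distinguishing : Prop :=
  (∀ x y : X, L.Iplus x = L.Iplus y → x = y) ∧ (∀ x y : X, L.Iminus x = L.Iminus y → x = y)

/-- Reflectivity. -/
def Reflective : Prop :=
  (∀ x y : X, L.Iplus x ⊆ L.Iplus y → L.Iminus y ⊆ L.Iminus x) ∧
  (∀ x y : X, L.Iminus y ⊆ L.Iminus x → L.Iplus x ⊆ L.Iplus y)

/-- Causal continuity. -/
def CausallyContinuous : Prop := L.Distinguishing ∧ L.Reflective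

/-- Stable causality: `K⁺` is antisymmetric. -/
def StablyCausal : Prop := ∀ x y : X, (x, y) ∈ L.Kplus → (y, x) ∈ L.Kplus → x = y

end LorentzianPreLengthSpace

/-- A distance homothetic map: `τ̃(f p, f q) = c · τ(p, q)` for some constant `c > 0`. -/
def DistanceHomothetic {X Y : Type*} [MetricSpace X] [MetricSpace Y]
    (LX : LorentzianPreLengthSpace X) (LY : LorentzianPreLengthSpace Y) (f : X → Y) : Prop :=
  ∃ c : ℝ≥0, 0 < c ∧ ∀ p q : X, LY.tau (f p) (f q) = (c : ℝ≥0∞) * LX.tau p q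

/-- A locally causally Lipschitz map. -/
def LocallyCausallyLipschitz {X Y : Type*} [MetricSpace X] [MetricSpace Y]
    (LX : LorentzianPreLengthSpace X) (f : X → Y) : Prop :=
  ∀ x : X, ∃ U : Set X, IsOpen U ∧ x ∈ U ∧ ∃ M : ℝ, 0 < M ∧
    ∀ x1 ∈ U, ∀ x2 ∈ U, LX.causal x1 x2 → dist (f x1) (f x2) ≤ M * dist x1 x2

/-! Pasts ordered by inclusion, `I⁻(x) ⊆ I⁻(y)`, form a transitive relation containing `J⁺`
(push-up). In a reflective space it is also closed: if `(xₙ, yₙ) → (x, y)` with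
`I⁻(xₙ) ⊆ I⁻(yₙ)` and `z ≪ w ≪ x`, then every `v ≫ y` lies in the future of `w`, so
`I⁺(y) ⊆ I⁺(w)` and reflectivity gives `z ∈ I⁻(w) ⊆ I⁻(y)`. Hence it contains `K⁺`, so
`K⁺`-related points in both directions have equal pasts and coincide by distinguishing. -/

namespace LorentzianPreLengthSpace

variable {X : Type*} [MetricSpace X] (L : LorentzianPreLengthSpace X)

lemma isOpen_Iplus (z : X) : IsOpen (L.Iplus z) := by
  have h : L.Iplus z = (fun u => L.tau z u) ⁻¹' Ioi 0 := by
    ext; exact L.tau_pos_iff.symm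
  rw [h]
  exact (L.tau_lsc.comp (Continuous.prodMk_right z)).isOpen_preimage 0

lemma isOpen_Iminus (z : X) : IsOpen (L.Iminus z) := by
  have h : L.Iminus z = (fun u => L.tau u z) ⁻¹' Ioi 0 := by
    ext; exact L.tau_pos_iff.symm
  rw [h]
  exact (L.tau_lsc.comp (Continuous.prodMk_left z)).isOpen_preimage 0

lemma chron_of_chron_of_causal {x y z : X} (hxy : L.chron x y) (hyz : L.causal y z) :
    L.chron x z := by
  refine L.tau_pos_iff.mp ?_
  calc 0 < L.tau x y := L.tau_pos_iff.mpr hxy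
    _ ≤ L.tau x y + L.tau y z := le_self_add
    _ ≤ L.tau x z := L.tau_rev_triangle (L.chron_imp_causal hxy) hyz

variable {L} in
lemma CausallyPathConnected.exists_chron_chron (hL : L.CausallyPathConnected) {x y : X}
    (hxy : L.chron x y) : ∃ w, L.chron x w ∧ L.chron w y := by
  obtain ⟨γ, a, b, ⟨hab, -, -, hγ⟩, rfl, rfl⟩ := hL.2 x y hxy
  have hmid : (a + b) / 2 ∈ Icc a b := ⟨by linarith, by linarith⟩
  exact ⟨γ ((a + b) / 2), hγ (left_mem_Icc.mpr hab.le) hmid (by linarith),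
    hγ hmid (right_mem_Icc.mpr hab.le) (by linarith)⟩

lemma Kplus_subset {R : Set (X × X)} (hR : IsClosed R)
    (htrans : ∀ a b c : X, (a, b) ∈ R → (b, c) ∈ R → (a, c) ∈ R)
    (hJ : {pq : X × X | L.causal pq.1 pq.2} ⊆ R) : L.Kplus ⊆ R :=
  sInter_subset_of_mem ⟨hR, htrans, hJ⟩

def pastLE : Set (X × X) := {pq | L.Iminus pq.1 ⊆ L.Iminus pq.2}

lemma causal_subset_pastLE : {pq : X × X | L.causal pq.1 pq.2} ⊆ L.pastLE :=
  fun _ hpq _ hz => L.chron_of_chron_of_causal hz hpq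

lemma pastLE_trans (a b c : X) (hab : (a, b) ∈ L.pastLE) (hbc : (b, c) ∈ L.pastLE) :
    (a, c) ∈ L.pastLE :=
  Subset.trans hab hbc

lemma Iplus_subset_of_mem_closure_pastLE {x y w : X} (hxy : (x, y) ∈ closure L.pastLE)
    (hwx : L.chron w x) : L.Iplus y ⊆ L.Iplus w := by
  intro v hyv
  obtain ⟨⟨p, q⟩, ⟨hwp, hqv⟩, hpq⟩ := mem_closure_iff.mp hxy _
    ((L.isOpen_Iplus w).prod (L.isOpen_Iminus v)) ⟨hwx, hyv⟩
  exact L.chron_trans (hpq hwp) hqv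

lemma isClosed_pastLE (hL : L.CausallyPathConnected)
    (hrefl : ∀ x y : X, L.Iplus x ⊆ L.Iplus y → L.Iminus y ⊆ L.Iminus x) :
    IsClosed L.pastLE := by
  refine isClosed_of_closure_subset fun ⟨x, y⟩ hxy z hzx => ?_
  obtain ⟨w, hzw, hwx⟩ := hL.exists_chron_chron hzx
  exact hrefl y w (L.Iplus_subset_of_mem_closure_pastLE hxy hwx) hzw

end LorentzianPreLengthSpace

/-- every causally continuous Lorentzian length space is stably causal:
the relation `K⁺` is antisymmetric. -/
theorem causallyContinuous_stablyCausal {X : Type*} [MetricSpace X]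
    (L : LorentzianPreLengthSpace X) (hL : L.IsLengthSpace)
    (hdist : L.Distinguishing) (hrefl : L.Reflective) :
    ∀ x y : X, (x, y) ∈ L.Kplus → (y, x) ∈ L.Kplus → x = y := by
  have hK : L.Kplus ⊆ L.pastLE :=
    L.Kplus_subset (L.isClosed_pastLE hL.1 hrefl.1) L.pastLE_trans L.causal_subset_pastLE
  intro x y hxy hyx
  exact hdist.2 x y ((hK hxy).antisymm (hK hyx))
end

section
/- Let (X, d, ≪, ≤, τ) be a distinguishing Lorentzian length space. If the time separation τ : X × X → [0, ∞] is continuous (with respect to the product of the metric topologies), then X is causally continuous, i.e. distinguishing and reflective. -/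
open scoped NNReal ENNReal
open Set Filter Topology

namespace LorentzianPreLengthSpace

variable {X : Type*} [MetricSpace X] {L : LorentzianPreLengthSpace X}

theorem IsFutureTimelikeCurve.start_mem_closure_Iplus {γ : ℝ → X} {a b : ℝ}
    (hγ : L.IsFutureTimelikeCurve γ a b) :
    γ a ∈ closure (L.Iplus (γ a)) := by
  obtain ⟨hab, ⟨K, hK⟩, -, hchron⟩ := hγ
  have ha : a ∈ closure (Ioc a b) := by
    rw [closure_Ioc hab.ne]
    exact left_mem_Icc.2 hab.le
  have hcont : ContinuousWithinAt γ (Ioc a b) a :=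
    (hK.continuousOn a (left_mem_Icc.2 hab.le)).mono Ioc_subset_Icc_self
  refine closure_mono ?_ (hcont.mem_closure_image ha)
  rintro _ ⟨t, ht, rfl⟩
  exact hchron (left_mem_Icc.2 hab.le) (Ioc_subset_Icc_self ht) ht.1

theorem IsFutureTimelikeCurve.end_mem_closure_Iminus {γ : ℝ → X} {a b : ℝ}
    (hγ : L.IsFutureTimelikeCurve γ a b) :
    γ b ∈ closure (L.Iminus (γ b)) := by
  obtain ⟨hab, ⟨K, hK⟩, -, hchron⟩ := hγ
  have hb : b ∈ closure (Ico a b) := by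
    rw [closure_Ico hab.ne]
    exact right_mem_Icc.2 hab.le
  have hcont : ContinuousWithinAt γ (Ico a b) b :=
    (hK.continuousOn b (right_mem_Icc.2 hab.le)).mono Ico_subset_Icc_self
  refine closure_mono ?_ (hcont.mem_closure_image hb)
  rintro _ ⟨t, ht, rfl⟩
  exact hchron (Ico_subset_Icc_self ht) (right_mem_Icc.2 hab.le) ht.2

theorem IsLengthSpace.mem_closure_Iplus_self (hL : L.IsLengthSpace) (x : X) :
    x ∈ closure (L.Iplus x) := by
  obtain ⟨Ω, -, hxΩ, -, -, -, -, -, -, -, hI, -⟩ := hL.2.2.1 x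
  obtain ⟨w, hxw, -⟩ := (hI x hxΩ).1
  obtain ⟨γ, a, b, hγ, rfl, -⟩ := hL.1.2 x w hxw
  exact hγ.start_mem_closure_Iplus

theorem IsLengthSpace.mem_closure_Iminus_self (hL : L.IsLengthSpace) (x : X) :
    x ∈ closure (L.Iminus x) := by
  obtain ⟨Ω, -, hxΩ, -, -, -, -, -, -, -, hI, -⟩ := hL.2.2.1 x
  obtain ⟨w, hwx, -⟩ := (hI x hxΩ).2
  obtain ⟨γ, a, b, hγ, -, rfl⟩ := hL.1.2 w x hwx
  exact hγ.end_mem_closure_Iminus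

/-- For `z ≪ y`, the reverse triangle inequality gives `τ(z, y) ≤ τ(z, u)` on `I⁺(y) ⊇ I⁺(x)`,
and continuity carries this bound to `x ∈ closure I⁺(x)`, so `τ(z, x) > 0`. -/
theorem Iminus_subset_of_Iplus_subset (hcont : Continuous fun p : X × X => L.tau p.1 p.2)
    {x y : X} (hx : x ∈ closure (L.Iplus x)) (hxy : L.Iplus x ⊆ L.Iplus y) :
    L.Iminus y ⊆ L.Iminus x := by
  intro z (hzy : L.chron z y)
  have hbound : L.Iplus x ⊆ {u | L.tau z y ≤ L.tau z u} := fun u hu =>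
    le_self_add.trans <| L.tau_rev_triangle (L.chron_imp_causal hzy)
      (L.chron_imp_causal (hxy hu))
  have hclosed : IsClosed {u | L.tau z y ≤ L.tau z u} :=
    isClosed_le continuous_const (hcont.comp (Continuous.prodMk_right z))
  exact L.tau_pos_iff.1 <| (L.tau_pos_iff.2 hzy).trans_le (closure_minimal hbound hclosed hx)

theorem Iplus_subset_of_Iminus_subset (hcont : Continuous fun p : X × X => L.tau p.1 p.2)
    {x y : X} (hy : y ∈ closure (L.Iminus y)) (hxy : L.Iminus y ⊆ L.Iminus x) :
    L.Iplus x ⊆ L.Iplus y := by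
  intro z (hxz : L.chron x z)
  have hbound : L.Iminus y ⊆ {u | L.tau x z ≤ L.tau u z} := fun u hu =>
    le_add_self.trans <| L.tau_rev_triangle (L.chron_imp_causal (hxy hu))
      (L.chron_imp_causal hxz)
  have hclosed : IsClosed {u | L.tau x z ≤ L.tau u z} :=
    isClosed_le continuous_const (hcont.comp (Continuous.prodMk_left z))
  exact L.tau_pos_iff.1 <| (L.tau_pos_iff.2 hxz).trans_le (closure_minimal hbound hclosed hy)

theorem IsLengthSpace.reflective_of_continuous_tau (hL : L.IsLengthSpace)
    (hcont : Continuous fun p : X × X => L.tau p.1 p.2) : L.Reflective :=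
  ⟨fun x _ => Iminus_subset_of_Iplus_subset hcont (hL.mem_closure_Iplus_self x),
    fun _ y => Iplus_subset_of_Iminus_subset hcont (hL.mem_closure_Iminus_self y)⟩

end LorentzianPreLengthSpace

/-- a distinguishing Lorentzian length space with continuous time separation
is causally continuous. -/
theorem continuous_tau_causallyContinuous {X : Type*} [MetricSpace X]
    (L : LorentzianPreLengthSpace X) (hL : L.IsLengthSpace)
    (hdist : L.Distinguishing)
    (hcont : Continuous fun p : X × X => L.tau p.1 p.2) :
    L.Distinguishing ∧ L.Reflective :=
  ⟨hdist, hL.reflective_of_continuous_tau hcont⟩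
end
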